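/- arXiv:2002.03063 — 2 statements merged into one kernel-verified Lean document; each statement's English description precedes it below -/
import Mathlib

section
/- For all real p with 0 ≤ p ≤ 1, all real t ≥ 0, and all real x: p·cosh(x + t(p−1)) + (1−p)·cosh(x + t·p) ≤ exp(t²/2)·cosh(x). -/
open Real

lemma exp_neg_le (t : ℝ) (ht : 0 ≤ t) : Real.exp (-t) ≤ 1 - t + t ^ 2 / 2 := by
  have h1 : 1 + t + t ^ 2 / 2 + t ^ 3 / 6 ≤ Real.exp t := by
    have := Real.sum_le_exp_of_nonneg ht 4
    simp [Finset.sum_range_succ, Nat.factorial] at this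
    nlinarith [this]
  have hpos : (0:ℝ) < 1 - t + t ^ 2 / 2 := by nlinarith
  rw [Real.exp_neg, inv_le_comm₀ (Real.exp_pos t) hpos] at *
  calc (1 - t + t ^ 2 / 2)⁻¹ ≤ 1 + t + t ^ 2 / 2 + t ^ 3 / 6 := by
        rw [inv_le_iff_one_le_mul₀ hpos]
        nlinarith [pow_nonneg ht 3, pow_nonneg ht 4, pow_nonneg ht 5]
    _ ≤ Real.exp t := h1

lemma key (p t : ℝ) (hp0 : 0 ≤ p) (hp1 : p ≤ 1) (ht : 0 ≤ t) :
    p * Real.exp (t * (p - 1)) + (1 - p) * Real.exp (t * p) ≤ Real.exp (t ^ 2 / 2) := by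
  have h1 : p * Real.exp (t * (p - 1)) + (1 - p) * Real.exp (t * p)
      = Real.exp (t * p) * (1 + p * (Real.exp (-t) - 1)) := by
    have : t * (p - 1) = t * p + (-t) := by ring
    rw [this, Real.exp_add]; ring
  rw [h1]
  have h2 : 1 + p * (Real.exp (-t) - 1) ≤ Real.exp (p * (Real.exp (-t) - 1)) := by
    linarith [Real.add_one_le_exp (p * (Real.exp (-t) - 1))]
  have h3 : Real.exp (t * p) * (1 + p * (Real.exp (-t) - 1))
      ≤ Real.exp (t * p) * Real.exp (p * (Real.exp (-t) - 1)) := by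
    apply mul_le_mul_of_nonneg_left h2 (Real.exp_pos _).le
  refine h3.trans ?_
  rw [← Real.exp_add, Real.exp_le_exp]
  have h4 := exp_neg_le t ht
  have h5 : 1 - t ≤ Real.exp (-t) := by
    have := Real.add_one_le_exp (-t); linarith
  nlinarith [sq_nonneg t]

theorem stmt_3 (p t x : ℝ) (hp0 : 0 ≤ p) (hp1 : p ≤ 1) (ht : 0 ≤ t) :
    p * Real.cosh (x + t * (p - 1)) + (1 - p) * Real.cosh (x + t * p) ≤
      Real.exp (t ^ 2 / 2) * Real.cosh x := by
  have hA := key p t hp0 hp1 ht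
  have hB := key (1 - p) t (by linarith) (by linarith) ht
  have hB' : (1 - p) * Real.exp (t * ((1-p) - 1)) + p * Real.exp (t * (1-p)) ≤ Real.exp (t^2/2) := by
    linarith [hB]
  -- rewrite everything in exp form
  have hx1 : (0:ℝ) < Real.exp x := Real.exp_pos _
  have hx2 : (0:ℝ) < Real.exp (-x) := Real.exp_pos _
  have hs1 : t * ((1-p) - 1) = -(t * p) := by ring
  have hs2 : t * (1 - p) = -(t * (p - 1)) := by ring
  rw [hs1, hs2] at hB'
  have goal : p * ((Real.exp x * Real.exp (t*(p-1)) + Real.exp (-x) * Real.exp (-(t*(p-1)))) / 2)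
      + (1 - p) * ((Real.exp x * Real.exp (t*p) + Real.exp (-x) * Real.exp (-(t*p))) / 2)
      ≤ Real.exp (t^2/2) * ((Real.exp x + Real.exp (-x)) / 2) := by
    nlinarith [mul_le_mul_of_nonneg_left hA hx1.le, mul_le_mul_of_nonneg_left hB' hx2.le]
  calc p * Real.cosh (x + t * (p - 1)) + (1 - p) * Real.cosh (x + t * p)
      = p * ((Real.exp x * Real.exp (t*(p-1)) + Real.exp (-x) * Real.exp (-(t*(p-1)))) / 2)
      + (1 - p) * ((Real.exp x * Real.exp (t*p) + Real.exp (-x) * Real.exp (-(t*p))) / 2) := by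
        simp only [Real.cosh_eq, neg_add, Real.exp_add]
    _ ≤ Real.exp (t^2/2) * ((Real.exp x + Real.exp (-x)) / 2) := goal
    _ = Real.exp (t^2/2) * Real.cosh x := by rw [Real.cosh_eq]
end

section
/- For all real p with 0 ≤ p ≤ 1 and all real t with 0 ≤ t < 2: p·exp(t(p−1)) + (1−p)·exp(t·p) ≤ 1 + t²/2. -/
/-!
The left-hand side is the moment generating function of a centred Bernoulli variable. Comparing
derivatives in `t` bounds it by `1 + p (1 - p) (exp t - 1 - t)`; then `p (1 - p) ≤ 1 / 4`, and
squaring the second-order Taylor bound for `exp (t / 2)` gives `exp t - 1 - t ≤ 3 t ^ 2 / 2` on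
`[0, 2]`.
-/

open Real

lemma Real.exp_sub_one_sub_le_of_le_two {t : ℝ} (ht0 : 0 ≤ t) (ht2 : t ≤ 2) :
    exp t - 1 - t ≤ 3 / 2 * t ^ 2 := by
  have hhalf : exp (t / 2) ≤ 1 + t / 2 + (t / 2) ^ 2 := by
    have := abs_exp_sub_one_sub_id_le (x := t / 2) (by rw [abs_le]; constructor <;> linarith)
    linarith [le_abs_self (exp (t / 2) - 1 - t / 2)]
  have hsq : exp t = exp (t / 2) ^ 2 := by rw [← exp_nat_mul]; ring_nf
  calc exp t - 1 - t ≤ (1 + t / 2 + (t / 2) ^ 2) ^ 2 - 1 - t := by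
        rw [hsq]; gcongr
    _ ≤ 3 / 2 * t ^ 2 := by nlinarith [mul_nonneg (mul_nonneg ht0 ht0) (sub_nonneg.2 ht2)]

lemma centered_bernoulli_mgf_gap_deriv_nonneg {p x : ℝ} (hp0 : 0 ≤ p) (hp1 : p ≤ 1)
    (hx : 0 ≤ x) :
    0 ≤ p * (1 - p) * (exp x - 1)
      - (p * ((p - 1) * exp (x * (p - 1))) + (1 - p) * (p * exp (x * p))) := by
  have ha : 1 ≤ exp (x * p) := one_le_exp (mul_nonneg hx hp0)
  have hb : 1 ≤ exp (x * (1 - p)) := one_le_exp (mul_nonneg hx (by linarith))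
  have hinv : exp (x * (p - 1)) * exp (x * (1 - p)) = 1 := by
    rw [← exp_add]; ring_nf; exact exp_zero
  have hprod : exp x = exp (x * p) * exp (x * (1 - p)) := by rw [← exp_add]; ring_nf
  -- with `a = exp (x p)`, `b = exp (x (1 - p))` this is `(b - 1) (a b - 1) / b`
  have hfactor : 0 ≤ exp x - 1 + exp (x * (p - 1)) - exp (x * p) := by
    nlinarith [exp_pos (x * (1 - p)),
      mul_nonneg (sub_nonneg.2 hb) (sub_nonneg.2 (one_le_mul_of_one_le_of_one_le ha hb))]
  nlinarith [mul_nonneg (mul_nonneg hp0 (sub_nonneg.2 hp1)) hfactor]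

lemma centered_bernoulli_mgf_le {p t : ℝ} (hp0 : 0 ≤ p) (hp1 : p ≤ 1) (ht : 0 ≤ t) :
    p * exp (t * (p - 1)) + (1 - p) * exp (t * p) ≤ 1 + p * (1 - p) * (exp t - 1 - t) := by
  set F : ℝ → ℝ := fun x =>
    1 + p * (1 - p) * (exp x - 1 - x) - (p * exp (x * (p - 1)) + (1 - p) * exp (x * p))
  have hF : ∀ x, HasDerivAt F (p * (1 - p) * (exp x - 1)
      - (p * ((p - 1) * exp (x * (p - 1))) + (1 - p) * (p * exp (x * p)))) x := by
    intro x
    have hlin (c : ℝ) : HasDerivAt (fun x => exp (x * c)) (c * exp (x * c)) x := by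
      simpa only [mul_comm _ c] using (hasDerivAt_mul_const (x := x) c).exp
    have htaylor : HasDerivAt (fun x => exp x - 1 - x) (exp x - 1) x :=
      ((hasDerivAt_exp x).sub_const 1).sub (hasDerivAt_id x)
    exact ((htaylor.const_mul _).const_add 1).sub
      (((hlin _).const_mul p).add ((hlin p).const_mul (1 - p)))
  have hmono : MonotoneOn F (Set.Ici 0) := by
    refine monotoneOn_of_deriv_nonneg (convex_Ici 0)
      (fun x _ => (hF x).continuousAt.continuousWithinAt)
      (fun x _ => (hF x).differentiableAt.differentiableWithinAt) fun x hx => ?_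
    rw [interior_Ici] at hx
    rw [(hF x).deriv]
    exact centered_bernoulli_mgf_gap_deriv_nonneg hp0 hp1 (le_of_lt hx)
  have := hmono Set.self_mem_Ici (Set.mem_Ici.2 ht) ht
  simp only [F, zero_mul, exp_zero, sub_self, mul_zero] at this
  linarith

theorem stmt_4 (p t : ℝ) (hp0 : 0 ≤ p) (hp1 : p ≤ 1) (ht0 : 0 ≤ t) (ht2 : t < 2) :
    p * Real.exp (t * (p - 1)) + (1 - p) * Real.exp (t * p) ≤ 1 + t ^ 2 / 2 := by
  have hvar : p * (1 - p) ≤ 1 / 4 := by nlinarith [sq_nonneg (p - 1 / 2)]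
  have htaylor := exp_sub_one_sub_le_of_le_two ht0 ht2.le
  have htaylor_nonneg : 0 ≤ exp t - 1 - t := by linarith [add_one_le_exp t]
  calc p * exp (t * (p - 1)) + (1 - p) * exp (t * p)
      ≤ 1 + p * (1 - p) * (exp t - 1 - t) := centered_bernoulli_mgf_le hp0 hp1 ht0
    _ ≤ 1 + 1 / 4 * (3 / 2 * t ^ 2) := by gcongr
    _ ≤ 1 + t ^ 2 / 2 := by nlinarith [sq_nonneg t]
end
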